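/- Let σ : [t0,T] → ℝ be differentiable with g(t)² = dσ²(t)/dt, and let s, h : ℝ^D × [t0,T] → ℝ^D be smooth with h(x,t) = x + σ²(t)·s(x,t). Then s satisfies the PDE ∂ₜs = (1/2)g²(t)Δₓs + g²(t)·(Jac_x s)·s if and only if h satisfies ∂ₜh = (1/2)g²(t)Δₓh + g²(t)·(Jac_x h)·s. -/

import Mathlib

open Finset Set

/-- Partial derivative in the `j`-th coordinate. -/
noncomputable def pd {D : ℕ} (j : Fin D) (f : (Fin D → ℝ) → ℝ) (x : Fin D → ℝ) : ℝ :=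
  fderiv ℝ f x (Pi.single j 1)

/-- Componentwise Laplacian in `x` of a vector field. -/
noncomputable def vecLap {D : ℕ} (F : (Fin D → ℝ) → (Fin D → ℝ)) (x : Fin D → ℝ) :
    Fin D → ℝ :=
  fun i => ∑ j, pd j (fun y => pd j (fun z => F z i) y) x

/-- Jacobian in `x` of a vector field applied to a vector: `(Jac_x F)(x) · v`. -/
noncomputable def jacMul {D : ℕ} (F : (Fin D → ℝ) → (Fin D → ℝ)) (x v : Fin D → ℝ) :
    Fin D → ℝ :=
  fderiv ℝ F x v

section aux
variable {D : ℕ}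

lemma pd_contDiff (j : Fin D) {f : (Fin D → ℝ) → ℝ} (hf : ContDiff ℝ (⊤ : ℕ∞) f) :
    ContDiff ℝ (⊤ : ℕ∞) (fun x => pd j f x) :=
  (hf.fderiv_right (by simp)).clm_apply contDiff_const

lemma pd_add (j : Fin D) {f g : (Fin D → ℝ) → ℝ} (x : Fin D → ℝ)
    (hf : DifferentiableAt ℝ f x) (hg : DifferentiableAt ℝ g x) :
    pd j (fun y => f y + g y) x = pd j f x + pd j g x := by
  unfold pd; rw [fderiv_fun_add hf hg]; rfl

lemma pd_const_mul (j : Fin D) (c : ℝ) {f : (Fin D → ℝ) → ℝ} (x : Fin D → ℝ)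
    (hf : DifferentiableAt ℝ f x) :
    pd j (fun y => c * f y) x = c * pd j f x := by
  unfold pd; rw [fderiv_const_mul hf]; rfl

lemma pd_const_add (j : Fin D) (c : ℝ) {f : (Fin D → ℝ) → ℝ} (x : Fin D → ℝ)
    (hf : DifferentiableAt ℝ f x) :
    pd j (fun y => c + f y) x = pd j f x := by
  unfold pd; rw [fderiv_const_add]

lemma pd_coord (j i : Fin D) (x : Fin D → ℝ) :
    pd j (fun y : Fin D → ℝ => y i) x = (Pi.single j (1:ℝ) : Fin D → ℝ) i := by
  unfold pd
  have : (fun y : Fin D → ℝ => y i)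
      = (ContinuousLinearMap.proj i : (Fin D → ℝ) →L[ℝ] ℝ) := rfl
  rw [this, ContinuousLinearMap.fderiv]
  rfl

end aux

/-- With `h(x,t) = x + σ²(t) s(x,t)` and `g(t)² = dσ²/dt`, the score `s`
satisfies `∂ₜ s = ½ g² Δₓ s + g² (Jac_x s)·s` iff the denoiser `h` satisfies the
corresponding PDE `∂ₜ h = ½ g² Δₓ h + g² (Jac_x h)·s`. -/
theorem stmt0 {D : ℕ} (t0 T : ℝ) (ht0T : t0 ≤ T) (σsq g : ℝ → ℝ)
    (hσ : Differentiable ℝ σsq)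
    (hg : ∀ t ∈ Set.Icc t0 T, (g t) ^ 2 = deriv σsq t)
    (hσpos : ∀ t ∈ Set.Icc t0 T, 0 < σsq t)
    (s h : (Fin D → ℝ) → ℝ → (Fin D → ℝ))
    (hs : ContDiff ℝ (⊤ : ℕ∞) (fun p : (Fin D → ℝ) × ℝ => s p.1 p.2))
    (hh : ContDiff ℝ (⊤ : ℕ∞) (fun p : (Fin D → ℝ) × ℝ => h p.1 p.2))
    (hrel : ∀ x t, h x t = x + σsq t • s x t) :
    (∀ x : Fin D → ℝ, ∀ t ∈ Set.Icc t0 T,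
        deriv (fun τ => s x τ) t
          = ((1 : ℝ) / 2 * (g t) ^ 2) • vecLap (fun y => s y t) x
            + ((g t) ^ 2) • jacMul (fun y => s y t) x (s x t))
    ↔ (∀ x : Fin D → ℝ, ∀ t ∈ Set.Icc t0 T,
        deriv (fun τ => h x τ) t
          = ((1 : ℝ) / 2 * (g t) ^ 2) • vecLap (fun y => h y t) x
            + ((g t) ^ 2) • jacMul (fun y => h y t) x (s x t)) := by
  -- smoothness of slices
  have hsx : ∀ t, ContDiff ℝ (⊤ : ℕ∞) (fun y => s y t) := fun t =>
    hs.comp (contDiff_id.prodMk contDiff_const)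
  have hst : ∀ x, ContDiff ℝ (⊤ : ℕ∞) (fun τ => s x τ) := fun x =>
    hs.comp (contDiff_const.prodMk contDiff_id)
  have hsi : ∀ t i, ContDiff ℝ (⊤ : ℕ∞) (fun y => s y t i) := fun t i =>
    ((ContinuousLinearMap.proj i : (Fin D → ℝ) →L[ℝ] ℝ).contDiff).comp (hsx t)
  -- key identities
  have hderiv : ∀ x t, deriv (fun τ => h x τ) t
      = deriv σsq t • s x t + σsq t • deriv (fun τ => s x τ) t := by
    intro x t
    have h1 : (fun τ => h x τ) = fun τ => x + σsq τ • s x τ := funext fun τ => hrel x τ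
    have hds : HasDerivAt (fun τ => s x τ) (deriv (fun τ => s x τ) t) t :=
      (((hst x).differentiable (by simp)) t).hasDerivAt
    have := ((hσ t).hasDerivAt.fun_smul hds).const_add x
    rw [h1, this.deriv, add_comm]
  have hlap : ∀ x t, vecLap (fun y => h y t) x = σsq t • vecLap (fun y => s y t) x := by
    intro x t
    funext i
    have hcomp : ∀ z : Fin D → ℝ, h z t i = z i + σsq t * s z t i := by
      intro z; rw [hrel]; simp [Pi.smul_apply, smul_eq_mul]
    have hdsi : ∀ y, DifferentiableAt ℝ (fun z => s z t i) y := fun y =>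
      ((hsi t i).differentiable (by simp)) y
    have hpd1 : ∀ j y, pd j (fun z => h z t i) y
        = (Pi.single j (1:ℝ) : Fin D → ℝ) i + σsq t * pd j (fun z => s z t i) y := by
      intro j y
      have : (fun z => h z t i) = fun z => z i + σsq t * s z t i := funext hcomp
      have hc : DifferentiableAt ℝ (fun z : Fin D → ℝ => z i) y :=
        (ContinuousLinearMap.proj i : (Fin D → ℝ) →L[ℝ] ℝ).differentiableAt
      rw [this, pd_add j y hc ((hdsi y).const_mul _), pd_const_mul j _ y (hdsi y), pd_coord]
    have hpd2 : ∀ j, pd j (fun y => pd j (fun z => h z t i) y) x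
        = σsq t * pd j (fun y => pd j (fun z => s z t i) y) x := by
      intro j
      have e1 : (fun y => pd j (fun z => h z t i) y)
          = fun y => (Pi.single j (1:ℝ) : Fin D → ℝ) i
            + σsq t * pd j (fun z => s z t i) y := funext (hpd1 j)
      have hdp : DifferentiableAt ℝ (fun y => pd j (fun z => s z t i) y) x :=
        ((pd_contDiff j (hsi t i)).differentiable (by simp)) x
      rw [e1, pd_const_add j _ x (hdp.const_mul _), pd_const_mul j _ x hdp]
    simp only [vecLap, hpd2, Pi.smul_apply, smul_eq_mul, Finset.mul_sum]
  have hjac : ∀ x t v, jacMul (fun y => h y t) x v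
      = v + σsq t • jacMul (fun y => s y t) x v := by
    intro x t v
    have e1 : (fun y => h y t) = fun y => y + σsq t • s y t := funext fun y => hrel y t
    have hdx : DifferentiableAt ℝ (fun y => s y t) x := ((hsx t).differentiable (by simp)) x
    unfold jacMul
    rw [e1, fderiv_fun_add (g := fun y => σsq t • s y t) differentiableAt_fun_id (hdx.const_smul (σsq t)), fderiv_fun_const_smul hdx,
      fderiv_id']
    simp
  -- the algebraic equivalence at each (x, t)
  have key : ∀ x : Fin D → ℝ, ∀ t ∈ Set.Icc t0 T,
      (deriv (fun τ => s x τ) t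
          = ((1 : ℝ) / 2 * (g t) ^ 2) • vecLap (fun y => s y t) x
            + ((g t) ^ 2) • jacMul (fun y => s y t) x (s x t))
      ↔ (deriv (fun τ => h x τ) t
          = ((1 : ℝ) / 2 * (g t) ^ 2) • vecLap (fun y => h y t) x
            + ((g t) ^ 2) • jacMul (fun y => h y t) x (s x t)) := by
    intro x t ht
    rw [hderiv, hlap, hjac, ← hg t ht]
    have hne : σsq t ≠ 0 := (hσpos t ht).ne'
    constructor
    · intro hEq
      rw [hEq]
      module
    · intro hEq
      have : σsq t • deriv (fun τ => s x τ) t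
          = σsq t • (((1 : ℝ) / 2 * (g t) ^ 2) • vecLap (fun y => s y t) x
            + ((g t) ^ 2) • jacMul (fun y => s y t) x (s x t)) := by
        have := hEq
        rw [smul_add] at this ⊢
        linear_combination (norm := module) this
      exact smul_right_injective _ hne this
  exact ⟨fun H x t ht => (key x t ht).mp (H x t ht),
    fun H x t ht => (key x t ht).mpr (H x t ht)⟩
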